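/- With notation as in the folding lemma, suppose the folded matrix W' = Φ_g(W) ∈ ℝ^{N×MK²} admits a factorization W' = U' S' V' with U' ∈ ℝ^{N×R}, S' ∈ ℝ^{R×R}, V' ∈ ℝ^{R×MK²} (e.g., an SVD). Let U ∈ ℝ^{N×R×1×1}, S ∈ ℝ^{R×R×1×1} be the 1×1-kernel tensors of U' and S', and V = Φ_g⁻¹(V') ∈ ℝ^{R×M×K×K}. Then for every X ∈ ℝ^{M×J×J}: W ∗₂ X = U ∗₂ (S ∗₂ (V ∗₂ X)). -/
import Mathlib


open scoped BigOperators

/-- Zero-padded access to an `M × J × J` feature map at integer spatial indices. -/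
noncomputable def pad {M J : ℕ} (X : Fin M → Fin J → Fin J → ℝ) (m : Fin M) (i1 i2 : ℤ) : ℝ :=
  if h : 0 ≤ i1 ∧ i1 < (J : ℤ) ∧ 0 ≤ i2 ∧ i2 < (J : ℤ) then
    X m ⟨i1.toNat, by omega⟩ ⟨i2.toNat, by omega⟩
  else 0

/-- 2D convolution of an `M × J × J` input with an `N × M × K × K` kernel, zero padding,
(0-based version of `y_{n,j1,j2} = Σ w_{n,m,k1,k2} X_{m, j1+k1-(K-1)/2-1, j2+k2-(K-1)/2-1}`). -/
noncomputable def conv2d {N M K J : ℕ} (W : Fin N → Fin M → Fin K → Fin K → ℝ)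
    (X : Fin M → Fin J → Fin J → ℝ) (n : Fin N) (j1 j2 : Fin J) : ℝ :=
  ∑ m, ∑ k1, ∑ k2, W n m k1 k2 *
    pad X m ((j1 : ℤ) + (k1 : ℤ) - ((K : ℤ) - 1) / 2) ((j2 : ℤ) + (k2 : ℤ) - ((K : ℤ) - 1) / 2)

/-- Folding a kernel tensor `W ∈ ℝ^{N×M×K×K}` into a matrix `ℝ^{N×MK²}` along a bijection `g`. -/
def fold {N M K : ℕ} (g : Fin M × Fin K × Fin K ≃ Fin (M * K ^ 2))
    (W : Fin N → Fin M → Fin K → Fin K → ℝ) : Matrix (Fin N) (Fin (M * K ^ 2)) ℝ :=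
  fun n i => W n (g.symm i).1 (g.symm i).2.1 (g.symm i).2.2

/-- Unfolding a matrix `ℝ^{N×MK²}` back into a kernel tensor along a bijection `g`. -/
def unfold {N M K : ℕ} (g : Fin M × Fin K × Fin K ≃ Fin (M * K ^ 2))
    (W' : Matrix (Fin N) (Fin (M * K ^ 2)) ℝ) : Fin N → Fin M → Fin K → Fin K → ℝ :=
  fun n m k1 k2 => W' n (g (m, k1, k2))


lemma pad_coe {M J : ℕ} (X : Fin M → Fin J → Fin J → ℝ) (m : Fin M) (j1 j2 : Fin J) :
    pad X m (j1 : ℤ) (j2 : ℤ) = X m j1 j2 := by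
  unfold pad
  rw [dif_pos ⟨Int.ofNat_nonneg _, by exact_mod_cast j1.isLt, Int.ofNat_nonneg _,
    by exact_mod_cast j2.isLt⟩]
  congr 1

lemma conv2d_one {N M J : ℕ} (A : Matrix (Fin N) (Fin M) ℝ)
    (Y : Fin M → Fin J → Fin J → ℝ) (n : Fin N) (j1 j2 : Fin J) :
    conv2d (fun n m (_ : Fin 1) (_ : Fin 1) => A n m) Y n j1 j2 = ∑ m, A n m * Y m j1 j2 := by
  unfold conv2d
  simp only [Fin.sum_univ_one, Fin.val_zero, Int.ofNat_zero, Nat.cast_one]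
  congr 1; funext m; congr 1
  · norm_num [pad_coe]

lemma pull3 {β γ δ : Type*} [Fintype β] [Fintype γ] [Fintype δ] (f : β → γ → δ → ℝ) :
    ∑ b, ∑ c, ∑ d, f b c d = ∑ d, ∑ b, ∑ c, f b c d := by
  calc ∑ b, ∑ c, ∑ d, f b c d = ∑ b, ∑ d, ∑ c, f b c d :=
        Finset.sum_congr rfl fun b _ => Finset.sum_comm
    _ = ∑ d, ∑ b, ∑ c, f b c d := Finset.sum_comm

lemma pull4 {α β γ δ : Type*} [Fintype α] [Fintype β] [Fintype γ] [Fintype δ]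
    (f : α → β → γ → δ → ℝ) :
    ∑ a, ∑ b, ∑ c, ∑ d, f a b c d = ∑ d, ∑ a, ∑ b, ∑ c, f a b c d := by
  calc ∑ a, ∑ b, ∑ c, ∑ d, f a b c d = ∑ a, ∑ d, ∑ b, ∑ c, f a b c d :=
        Finset.sum_congr rfl fun a _ => pull3 _
    _ = ∑ d, ∑ a, ∑ b, ∑ c, f a b c d := Finset.sum_comm


/-- if the folded matrix factors as `W' = U'S'V'` (e.g. an SVD), then the
convolution by `W` equals the composition of the `K×K` convolution by `V = Φ_g⁻¹(V')`, the
`1×1` convolution by `S'` and the `1×1` convolution by `U'`. -/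
theorem conv2d_svd_factor {N M K J R : ℕ} (hK : Odd K)
    (g : Fin M × Fin K × Fin K ≃ Fin (M * K ^ 2))
    (W : Fin N → Fin M → Fin K → Fin K → ℝ)
    (U' : Matrix (Fin N) (Fin R) ℝ) (S' : Matrix (Fin R) (Fin R) ℝ)
    (V' : Matrix (Fin R) (Fin (M * K ^ 2)) ℝ)
    (hW : fold g W = U' * S' * V') (X : Fin M → Fin J → Fin J → ℝ) :
    conv2d W X
      = conv2d (fun n r (_ : Fin 1) (_ : Fin 1) => U' n r)
          (conv2d (fun r r' (_ : Fin 1) (_ : Fin 1) => S' r r')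
            (conv2d (unfold g V') X)) := by
  funext n j1 j2
  rw [conv2d_one]
  simp_rw [conv2d_one]
  have hWp : ∀ (m : Fin M) (k1 k2 : Fin K),
      W n m k1 k2 = ∑ r, ∑ r', U' n r * S' r r' * V' r' (g (m, k1, k2)) := by
    intro m k1 k2
    have h := congrFun (congrFun hW n) (g (m, k1, k2))
    simp only [fold, Equiv.symm_apply_apply] at h
    rw [h]
    simp_rw [Matrix.mul_apply, Finset.sum_mul]
    exact Finset.sum_comm
  unfold conv2d
  simp_rw [hWp, unfold, Finset.sum_mul, Finset.mul_sum]
  rw [pull4 (fun (m : Fin M) (k1 : Fin K) (k2 : Fin K) (r : Fin R) =>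
        ∑ r', U' n r * S' r r' * V' r' (g (m, k1, k2)) *
          pad X m ((j1 : ℤ) + (k1 : ℤ) - ((K : ℤ) - 1) / 2)
            ((j2 : ℤ) + (k2 : ℤ) - ((K : ℤ) - 1) / 2))]
  refine Finset.sum_congr rfl fun r _ => ?_
  rw [pull4 (fun (m : Fin M) (k1 : Fin K) (k2 : Fin K) (r' : Fin R) =>
        U' n r * S' r r' * V' r' (g (m, k1, k2)) *
          pad X m ((j1 : ℤ) + (k1 : ℤ) - ((K : ℤ) - 1) / 2)
            ((j2 : ℤ) + (k2 : ℤ) - ((K : ℤ) - 1) / 2))]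
  refine Finset.sum_congr rfl fun r' _ => ?_
  refine Finset.sum_congr rfl fun m _ => ?_
  refine Finset.sum_congr rfl fun k1 _ => ?_
  refine Finset.sum_congr rfl fun k2 _ => ?_
  ring
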